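/- Let n ∈ ℕ with n ≥ 2, let G be a nonempty bounded subset of ℝⁿ, and let γ₁, γ₂, γ₃ ∈ ℝ. Then the normed space (𝒦_{γ₁,γ₂,γ₃}(G), ‖·‖_{𝒦_{γ₁,γ₂,γ₃}(G)}) is complete: every sequence (K_m) of elements of 𝒦_{γ₁,γ₂,γ₃}(G) which is Cauchy with respect to ‖·‖_{𝒦_{γ₁,γ₂,γ₃}(G)} converges in this norm to some K ∈ 𝒦_{γ₁,γ₂,γ₃}(G). -/

import Mathlib

/-!
Each seminorm is a supremum of weighted pointwise quantities, so a Cauchy sequence converges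
pointwise off the diagonal, and a bound on the weighted quantities of `K p - K q` passes to the
limit `q → ∞`; this gives convergence in norm. The first seminorm bounds `|K(x,y)|` by
`|x-y|^{-γ₁}` times the norm, a weight that is locally bounded off the diagonal, so the
convergence is also locally uniform there and the limit is continuous.
-/

open Metric Set

/-- The set of values `‖x-y‖^γ₁ ‖K(x,y)‖` entering the first seminorm of the
kernel class `𝒦_{γ₁,γ₂,γ₃}(G)`. -/
def kerSet1 {n : ℕ} (γ₁ : ℝ) (G : Set (EuclideanSpace ℝ (Fin n)))
    (K : EuclideanSpace ℝ (Fin n) × EuclideanSpace ℝ (Fin n) → ℂ) : Set ℝ :=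
  {t | ∃ x ∈ G, ∃ y ∈ G, x ≠ y ∧ t = ‖x - y‖ ^ γ₁ * ‖K (x, y)‖}

/-- The set of values `(‖x'-y‖^γ₂/‖x'-x''‖^γ₃) ‖K(x',y) - K(x'',y)‖` entering the
second seminorm of the kernel class `𝒦_{γ₁,γ₂,γ₃}(G)`. -/
def kerSet2 {n : ℕ} (γ₂ γ₃ : ℝ) (G : Set (EuclideanSpace ℝ (Fin n)))
    (K : EuclideanSpace ℝ (Fin n) × EuclideanSpace ℝ (Fin n) → ℂ) : Set ℝ :=
  {t | ∃ x' ∈ G, ∃ x'' ∈ G, ∃ y ∈ G, x' ≠ x'' ∧ 2 * ‖x' - x''‖ ≤ ‖x' - y‖ ∧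
    t = ‖x' - y‖ ^ γ₂ / ‖x' - x''‖ ^ γ₃ * ‖K (x', y) - K (x'', y)‖}

/-- Membership in the kernel class `𝒦_{γ₁,γ₂,γ₃}(G)`: continuity off the diagonal
and finiteness of the two seminorms. -/
def memKer {n : ℕ} (γ₁ γ₂ γ₃ : ℝ) (G : Set (EuclideanSpace ℝ (Fin n)))
    (K : EuclideanSpace ℝ (Fin n) × EuclideanSpace ℝ (Fin n) → ℂ) : Prop :=
  ContinuousOn K ((G ×ˢ G) \ {p | p.1 = p.2}) ∧
  BddAbove (kerSet1 γ₁ G K) ∧ BddAbove (kerSet2 γ₂ γ₃ G K)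

/-- The norm `‖·‖_{𝒦_{γ₁,γ₂,γ₃}(G)}` of the kernel class. -/
noncomputable def kerNorm {n : ℕ} (γ₁ γ₂ γ₃ : ℝ) (G : Set (EuclideanSpace ℝ (Fin n)))
    (K : EuclideanSpace ℝ (Fin n) × EuclideanSpace ℝ (Fin n) → ℂ) : ℝ :=
  sSup (kerSet1 γ₁ G K) + sSup (kerSet2 γ₂ γ₃ G K)

open Filter Topology

lemma ne_and_ne_of_two_mul_norm_sub_le {E : Type*} [NormedAddCommGroup E] {x' x'' y : E}
    (hne : x' ≠ x'') (hsep : 2 * ‖x' - x''‖ ≤ ‖x' - y‖) : x' ≠ y ∧ x'' ≠ y := by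
  have hpos : 0 < ‖x' - x''‖ := norm_pos_iff.mpr (sub_ne_zero.mpr hne)
  constructor <;> rintro rfl
  · simp only [sub_self, norm_zero] at hsep
    linarith
  · linarith

section

variable {n : ℕ} {γ₁ γ₂ γ₃ : ℝ} {G : Set (EuclideanSpace ℝ (Fin n))}
  {J J₁ J₂ L : EuclideanSpace ℝ (Fin n) × EuclideanSpace ℝ (Fin n) → ℂ} {C C₁ C₂ : ℝ}

/-- Upper bounds rather than `sSup` are used, since `sSup` of an unbounded set of reals is `0`. -/
def IsKerBound (γ₁ γ₂ γ₃ : ℝ) (G : Set (EuclideanSpace ℝ (Fin n)))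
    (J : EuclideanSpace ℝ (Fin n) × EuclideanSpace ℝ (Fin n) → ℂ) (C : ℝ) : Prop :=
  C ∈ upperBounds (kerSet1 γ₁ G J) ∧ C ∈ upperBounds (kerSet2 γ₂ γ₃ G J)

lemma sSup_kerSet1_nonneg : 0 ≤ sSup (kerSet1 γ₁ G J) :=
  Real.sSup_nonneg <| by
    rintro _ ⟨x, -, y, -, -, rfl⟩
    positivity

lemma sSup_kerSet2_nonneg : 0 ≤ sSup (kerSet2 γ₂ γ₃ G J) :=
  Real.sSup_nonneg <| by
    rintro _ ⟨x', -, x'', -, y, -, -, -, rfl⟩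
    positivity

lemma isKerBound_kerNorm (h : memKer γ₁ γ₂ γ₃ G J) :
    IsKerBound γ₁ γ₂ γ₃ G J (kerNorm γ₁ γ₂ γ₃ G J) :=
  ⟨fun _ ht => (le_csSup h.2.1 ht).trans (le_add_of_nonneg_right sSup_kerSet2_nonneg),
    fun _ ht => (le_csSup h.2.2 ht).trans (le_add_of_nonneg_left sSup_kerSet1_nonneg)⟩

lemma kerNorm_le_of_isKerBound (hC : 0 ≤ C) (h : IsKerBound γ₁ γ₂ γ₃ G J C) :
    kerNorm γ₁ γ₂ γ₃ G J ≤ 2 * C := by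
  rw [two_mul]
  exact add_le_add (Real.sSup_le h.1 hC) (Real.sSup_le h.2 hC)

lemma IsKerBound.mono (h : IsKerBound γ₁ γ₂ γ₃ G J C₁) (hC : C₁ ≤ C₂) :
    IsKerBound γ₁ γ₂ γ₃ G J C₂ :=
  ⟨fun _ ht => (h.1 ht).trans hC, fun _ ht => (h.2 ht).trans hC⟩

lemma IsKerBound.sub (h₁ : IsKerBound γ₁ γ₂ γ₃ G J₁ C₁) (h₂ : IsKerBound γ₁ γ₂ γ₃ G J₂ C₂) :
    IsKerBound γ₁ γ₂ γ₃ G (J₁ - J₂) (C₁ + C₂) := by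
  have weighted_norm_sub_le : ∀ {w : ℝ} (u v : ℂ), 0 ≤ w → w * ‖u - v‖ ≤ w * ‖u‖ + w * ‖v‖ :=
    fun u v hw => (mul_le_mul_of_nonneg_left (norm_sub_le u v) hw).trans_eq (mul_add _ _ _)
  constructor
  · rintro _ ⟨x, hx, y, hy, hxy, rfl⟩
    exact (weighted_norm_sub_le _ _ (by positivity)).trans
      (add_le_add (h₁.1 ⟨x, hx, y, hy, hxy, rfl⟩) (h₂.1 ⟨x, hx, y, hy, hxy, rfl⟩))
  · rintro _ ⟨x', hx', x'', hx'', y, hy, hne, hsep, rfl⟩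
    rw [Pi.sub_apply, Pi.sub_apply, sub_sub_sub_comm]
    exact (weighted_norm_sub_le _ _ (by positivity)).trans
      (add_le_add (h₁.2 ⟨x', hx', x'', hx'', y, hy, hne, hsep, rfl⟩)
        (h₂.2 ⟨x', hx', x'', hx'', y, hy, hne, hsep, rfl⟩))

lemma memKer.sub (h₁ : memKer γ₁ γ₂ γ₃ G J₁) (h₂ : memKer γ₁ γ₂ γ₃ G J₂) :
    memKer γ₁ γ₂ γ₃ G (J₁ - J₂) :=
  have h := (isKerBound_kerNorm h₁).sub (isKerBound_kerNorm h₂)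
  ⟨h₁.1.sub h₂.1, ⟨_, h.1⟩, ⟨_, h.2⟩⟩

lemma IsKerBound.norm_apply_le (h : IsKerBound γ₁ γ₂ γ₃ G J C)
    {x y : EuclideanSpace ℝ (Fin n)} (hx : x ∈ G) (hy : y ∈ G) (hxy : x ≠ y) :
    ‖J (x, y)‖ ≤ ‖x - y‖ ^ (-γ₁) * C := by
  have hw : 0 < ‖x - y‖ ^ γ₁ :=
    Real.rpow_pos_of_pos (norm_pos_iff.mpr (sub_ne_zero.mpr hxy)) _
  rw [Real.rpow_neg (norm_nonneg _), inv_mul_eq_div, le_div_iff₀' hw]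
  exact h.1 ⟨x, hx, y, hy, hxy, rfl⟩

lemma IsKerBound.of_tendsto {ι : Type*} {l : Filter ι} [l.NeBot]
    {F : ι → EuclideanSpace ℝ (Fin n) × EuclideanSpace ℝ (Fin n) → ℂ}
    (hF : ∀ᶠ i in l, IsKerBound γ₁ γ₂ γ₃ G (F i) C)
    (hlim : ∀ x ∈ G, ∀ y ∈ G, x ≠ y → Tendsto (fun i => F i (x, y)) l (𝓝 (J (x, y)))) :
    IsKerBound γ₁ γ₂ γ₃ G J C := by
  constructor
  · rintro _ ⟨x, hx, y, hy, hxy, rfl⟩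
    exact le_of_tendsto ((hlim x hx y hy hxy).norm.const_mul _)
      (hF.mono fun i hi => hi.1 ⟨x, hx, y, hy, hxy, rfl⟩)
  · rintro _ ⟨x', hx', x'', hx'', y, hy, hne, hsep, rfl⟩
    obtain ⟨hx'y, hx''y⟩ := ne_and_ne_of_two_mul_norm_sub_le hne hsep
    exact le_of_tendsto
      (((hlim x' hx' y hy hx'y).sub (hlim x'' hx'' y hy hx''y)).norm.const_mul _)
      (hF.mono fun i hi => hi.2 ⟨x', hx', x'', hx'', y, hy, hne, hsep, rfl⟩)

lemma exists_isKerBound_sub_of_cauchy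
    (K : ℕ → EuclideanSpace ℝ (Fin n) × EuclideanSpace ℝ (Fin n) → ℂ)
    (hK : ∀ ε > 0, ∃ N, ∀ p ≥ N, ∀ q ≥ N, IsKerBound γ₁ γ₂ γ₃ G (K p - K q) ε) :
    ∃ L, ∀ ε > 0, ∀ᶠ m in atTop, IsKerBound γ₁ γ₂ γ₃ G (K m - L) ε := by
  have hcauchy : ∀ x ∈ G, ∀ y ∈ G, x ≠ y → CauchySeq fun m => K m (x, y) := by
    intro x hx y hy hxy
    have hw : 0 < ‖x - y‖ ^ (-γ₁) :=
      Real.rpow_pos_of_pos (norm_pos_iff.mpr (sub_ne_zero.mpr hxy)) _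
    refine Metric.cauchySeq_iff.mpr fun ε hε => ?_
    obtain ⟨N, hN⟩ := hK (ε / 2 / ‖x - y‖ ^ (-γ₁)) (by positivity)
    refine ⟨N, fun p hp q hq => ?_⟩
    calc dist (K p (x, y)) (K q (x, y))
        ≤ ‖x - y‖ ^ (-γ₁) * (ε / 2 / ‖x - y‖ ^ (-γ₁)) :=
          (dist_eq_norm _ _).trans_le ((hN p hp q hq).norm_apply_le hx hy hxy)
      _ = ε / 2 := mul_div_cancel₀ _ hw.ne'
      _ < ε := half_lt_self hε
  refine ⟨fun p => limUnder atTop fun m => K m p, fun ε hε => ?_⟩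
  obtain ⟨N, hN⟩ := hK ε hε
  filter_upwards [eventually_ge_atTop N] with m hm
  exact IsKerBound.of_tendsto (F := fun q => K m - K q)
    ((eventually_ge_atTop N).mono fun q hq => hN m hm q hq)
    fun x hx y hy hxy => tendsto_const_nhds.sub (hcauchy x hx y hy hxy).tendsto_limUnder

lemma continuousOn_of_isKerBound_sub
    {K : ℕ → EuclideanSpace ℝ (Fin n) × EuclideanSpace ℝ (Fin n) → ℂ}
    (hK : ∀ m, ContinuousOn (K m) ((G ×ˢ G) \ {p | p.1 = p.2}))
    (hL : ∀ ε > 0, ∀ᶠ m in atTop, IsKerBound γ₁ γ₂ γ₃ G (K m - L) ε) :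
    ContinuousOn L ((G ×ˢ G) \ {p | p.1 = p.2}) := by
  refine TendstoLocallyUniformlyOn.continuousOn ?_ (Frequently.of_forall (f := atTop) hK)
  refine Metric.tendstoLocallyUniformlyOn_iff.mpr fun ε hε p₀ hp₀ => ?_
  set w := fun p : EuclideanSpace ℝ (Fin n) × EuclideanSpace ℝ (Fin n) => ‖p.1 - p.2‖ ^ (-γ₁)
  have hw : ContinuousAt w p₀ :=
    (continuous_fst.sub continuous_snd).norm.continuousAt.rpow_const
      (Or.inl (norm_ne_zero_iff.mpr (sub_ne_zero.mpr hp₀.2)))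
  have hM : 0 < w p₀ + 1 := by positivity
  refine ⟨_, inter_mem_nhdsWithin _ (hw.eventually (gt_mem_nhds (lt_add_one (w p₀)))), ?_⟩
  filter_upwards [hL (ε / (w p₀ + 1)) (by positivity)] with m hm
  rintro ⟨x, y⟩ ⟨⟨⟨hx, hy⟩, hxy⟩, hwxy⟩
  rw [dist_comm, dist_eq_norm]
  calc ‖(K m - L) (x, y)‖ ≤ w (x, y) * (ε / (w p₀ + 1)) := hm.norm_apply_le hx hy hxy
    _ < (w p₀ + 1) * (ε / (w p₀ + 1)) := mul_lt_mul_of_pos_right hwxy (by positivity)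
    _ = ε := mul_div_cancel₀ _ hM.ne'

end

theorem stmt_15_general {n : ℕ} (G : Set (EuclideanSpace ℝ (Fin n)))
    (γ₁ γ₂ γ₃ : ℝ)
    (K : ℕ → EuclideanSpace ℝ (Fin n) × EuclideanSpace ℝ (Fin n) → ℂ)
    (hK : ∀ m, memKer γ₁ γ₂ γ₃ G (K m))
    (hcauchy : ∀ ε : ℝ, 0 < ε → ∃ N : ℕ, ∀ p ≥ N, ∀ q ≥ N,
      kerNorm γ₁ γ₂ γ₃ G (K p - K q) < ε) :
    ∃ L : EuclideanSpace ℝ (Fin n) × EuclideanSpace ℝ (Fin n) → ℂ,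
      memKer γ₁ γ₂ γ₃ G L ∧
      ∀ ε : ℝ, 0 < ε → ∃ N : ℕ, ∀ p ≥ N, kerNorm γ₁ γ₂ γ₃ G (K p - L) < ε := by
  have hcauchy' : ∀ ε > 0, ∃ N, ∀ p ≥ N, ∀ q ≥ N, IsKerBound γ₁ γ₂ γ₃ G (K p - K q) ε :=
    fun ε hε => (hcauchy ε hε).imp fun N hN p hp q hq =>
      (isKerBound_kerNorm ((hK p).sub (hK q))).mono (hN p hp q hq).le
  obtain ⟨L, hL⟩ := exists_isKerBound_sub_of_cauchy K hcauchy'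
  obtain ⟨N, hN⟩ := (hL 1 one_pos).exists
  have hLbound : IsKerBound γ₁ γ₂ γ₃ G L (kerNorm γ₁ γ₂ γ₃ G (K N) + 1) := by
    simpa only [sub_sub_cancel] using (isKerBound_kerNorm (hK N)).sub hN
  refine ⟨L, ⟨continuousOn_of_isKerBound_sub (fun m => (hK m).1) hL,
    ⟨_, hLbound.1⟩, ⟨_, hLbound.2⟩⟩, fun ε hε => ?_⟩
  obtain ⟨N, hN⟩ := eventually_atTop.mp (hL (ε / 3) (by positivity))
  exact ⟨N, fun p hp =>
    (kerNorm_le_of_isKerBound (by positivity) (hN p hp)).trans_lt (by linarith)⟩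

/-- the space `(𝒦_{γ₁,γ₂,γ₃}(G), ‖·‖_{𝒦_{γ₁,γ₂,γ₃}(G)})` is complete:
every Cauchy sequence in the class converges in norm to an element of the class. -/
theorem stmt_15 {n : ℕ} (hn : 2 ≤ n) (G : Set (EuclideanSpace ℝ (Fin n)))
    (hGne : G.Nonempty) (hGb : Bornology.IsBounded G) (γ₁ γ₂ γ₃ : ℝ)
    (K : ℕ → EuclideanSpace ℝ (Fin n) × EuclideanSpace ℝ (Fin n) → ℂ)
    (hK : ∀ m, memKer γ₁ γ₂ γ₃ G (K m))
    (hcauchy : ∀ ε : ℝ, 0 < ε → ∃ N : ℕ, ∀ p ≥ N, ∀ q ≥ N,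
      kerNorm γ₁ γ₂ γ₃ G (K p - K q) < ε) :
    ∃ L : EuclideanSpace ℝ (Fin n) × EuclideanSpace ℝ (Fin n) → ℂ,
      memKer γ₁ γ₂ γ₃ G L ∧
      ∀ ε : ℝ, 0 < ε → ∃ N : ℕ, ∀ p ≥ N, kerNorm γ₁ γ₂ γ₃ G (K p - L) < ε :=
  stmt_15_general G γ₁ γ₂ γ₃ K hK hcauchy
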